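/- Let φ be a graph automorphism of M and let x be a vertex such that φ x = x and φ y = y for every vertex y adjacent to x (i.e. φ fixes a tripod pointwise). Then φ is the identity automorphism. -/

import Mathlib

/-- The Möbius–Kantor graph, realized as the graph on `ZMod 16` in which
distinct `x, y` are adjacent iff there are `a ∈ {0, 1, 3}` and `v : ZMod 16`
with `v.val` even such that `{x, y} = {v, v + (2a - 1)}`. -/
def MKGraph : SimpleGraph (ZMod 16) where
  Adj x y := x ≠ y ∧ ∃ a ∈ ({0, 1, 3} : Set ℕ), ∃ v : ZMod 16, Even v.val ∧
    s(x, y) = s(v, v + (2 * (a : ZMod 16) - 1))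
  symm := by
    constructor
    rintro x y ⟨hxy, a, ha, v, hv, h⟩
    exact ⟨hxy.symm, a, ha, v, hv, Sym2.eq_swap.trans h⟩
  loopless := by
    constructor
    rintro x ⟨hxx, -⟩
    exact hxx rfl

/-! An automorphism preserves the relation "joined by a walk of length one or two", so it fixes
every vertex that is singled out by which of the already fixed vertices it is related to. From
the tripod at `0`, three rounds of this fix all of `M`. Translations by even elements and the
reflections `z ↦ c - z` with `c` odd are automorphisms, so every tripod is conjugate to the one
at `0`. -/

theorem Function.forall_mem_union_apply_eq_self {α : Type*} [DecidableEq α] {φ : α → α}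
    {R : α → α → Prop} (hR : ∀ a b, R (φ a) (φ b) ↔ R a b) {F S : Finset α}
    (hF : ∀ f ∈ F, φ f = f) (hS : ∀ z ∈ S, ∀ w, (∀ f ∈ F, R w f ↔ R z f) → w = z) :
    ∀ z ∈ F ∪ S, φ z = z := by
  refine Finset.forall_mem_union.2 ⟨hF, fun z hz => hS z hz (φ z) fun f hf => ?_⟩
  simpa only [hF f hf] using hR z f

namespace SimpleGraph

variable {V W : Type*} {G : SimpleGraph V} {H : SimpleGraph W}

def AdjOrAdjAdj (G : SimpleGraph V) (a b : V) : Prop :=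
  G.Adj a b ∨ ∃ c, G.Adj a c ∧ G.Adj c b

instance [Fintype V] [DecidableRel G.Adj] : DecidableRel G.AdjOrAdjAdj :=
  fun a b => inferInstanceAs (Decidable (G.Adj a b ∨ ∃ c, G.Adj a c ∧ G.Adj c b))

theorem Iso.adjOrAdjAdj_iff (φ : G ≃g H) {a b : V} :
    H.AdjOrAdjAdj (φ a) (φ b) ↔ G.AdjOrAdjAdj a b := by
  simp only [AdjOrAdjAdj, φ.surjective.exists, φ.map_adj_iff]

end SimpleGraph

theorem mkGraph_offset_iff {d : ZMod 16} :
    (∃ a ∈ ({0, 1, 3} : Set ℕ), 2 * (a : ZMod 16) - 1 = d) ↔ d = -1 ∨ d = 1 ∨ d = 5 := by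
  constructor
  · rintro ⟨a, rfl | rfl | rfl, rfl⟩ <;> norm_num
  · rintro (rfl | rfl | rfl)
    exacts [⟨0, by simp, by norm_num⟩, ⟨1, by simp, by norm_num⟩, ⟨3, by simp, by norm_num⟩]

theorem mkGraph_adj_iff {x y : ZMod 16} : MKGraph.Adj x y ↔
    Even x.val ∧ (y - x = -1 ∨ y - x = 1 ∨ y - x = 5) ∨
    Even y.val ∧ (x - y = -1 ∨ x - y = 1 ∨ x - y = 5) := by
  simp only [← mkGraph_offset_iff]
  constructor
  · rintro ⟨-, a, ha, v, hv, h⟩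
    rcases Sym2.eq_iff.1 h with ⟨rfl, rfl⟩ | ⟨rfl, rfl⟩
    · exact Or.inl ⟨hv, a, ha, by rw [add_sub_cancel_left]⟩
    · exact Or.inr ⟨hv, a, ha, by rw [add_sub_cancel_left]⟩
  · have hne : ∀ u w : ZMod 16, (∃ a ∈ ({0, 1, 3} : Set ℕ), 2 * (a : ZMod 16) - 1 = w - u) →
        u ≠ w := by
      rintro u w hd rfl
      rw [sub_self, mkGraph_offset_iff] at hd
      revert hd
      decide
    rintro (⟨hx, a, ha, hd⟩ | ⟨hy, a, ha, hd⟩)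
    · exact ⟨hne x y ⟨a, ha, hd⟩, a, ha, x, hx, by rw [hd, add_sub_cancel]⟩
    · exact ⟨(hne y x ⟨a, ha, hd⟩).symm, a, ha, y, hy, by rw [hd, add_sub_cancel, Sym2.eq_swap]⟩

instance : DecidableRel MKGraph.Adj := fun _ _ => decidable_of_iff' _ mkGraph_adj_iff

def mkGraphAddRight (c : ZMod 16) (hc : Even c.val) : MKGraph ≃g MKGraph where
  toEquiv := Equiv.addRight c
  map_rel_iff' := by
    revert c
    decide +kernel

def mkGraphSubLeft (c : ZMod 16) (hc : ¬Even c.val) : MKGraph ≃g MKGraph where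
  toEquiv := Equiv.subLeft c
  map_rel_iff' := by
    revert c
    decide +kernel

theorem mkGraph_exists_iso_apply_zero (x : ZMod 16) : ∃ ψ : MKGraph ≃g MKGraph, ψ 0 = x := by
  by_cases hx : Even x.val
  · exact ⟨mkGraphAddRight x hx, zero_add x⟩
  · exact ⟨mkGraphSubLeft x hx, sub_zero x⟩

theorem mkGraph_apply_eq_self_of_fixes_tripod_zero (φ : MKGraph ≃g MKGraph) (h0 : φ 0 = 0)
    (hnb : ∀ y, MKGraph.Adj 0 y → φ y = y) : ∀ z, φ z = z := by
  have hR (a b : ZMod 16) := φ.adjOrAdjAdj_iff (a := a) (b := b)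
  have h₀ : ∀ z ∈ ({0, 1, 5, 15} : Finset (ZMod 16)), φ z = z := by
    simp only [Finset.mem_insert, Finset.mem_singleton, forall_eq_or_imp, forall_eq]
    exact ⟨h0, hnb 1 (by decide), hnb 5 (by decide), hnb 15 (by decide)⟩
  have h₁ := Function.forall_mem_union_apply_eq_self hR h₀ (S := {7, 8, 9, 13})
    (by decide +kernel)
  have h₂ := Function.forall_mem_union_apply_eq_self hR h₁ (S := {2, 4, 6, 10, 12, 14})
    (by decide +kernel)
  have h₃ := Function.forall_mem_union_apply_eq_self hR h₂ (S := {3, 11}) (by decide +kernel)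
  exact fun z => h₃ z (by revert z; decide)

/-- An automorphism of the Möbius–Kantor graph fixing a tripod pointwise is
the identity. -/
theorem stmt_14 (φ : MKGraph ≃g MKGraph) (x : ZMod 16)
    (hx : φ x = x) (hnb : ∀ y : ZMod 16, MKGraph.Adj x y → φ y = y) :
    ∀ z : ZMod 16, φ z = z := by
  obtain ⟨ψ, rfl⟩ := mkGraph_exists_iso_apply_zero x
  have hconj := mkGraph_apply_eq_self_of_fixes_tripod_zero (ψ.trans (φ.trans ψ.symm))
    (by simp [hx]) (fun y hy => by simp [hnb _ (ψ.map_adj_iff.2 hy)])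
  intro z
  simpa using congrArg ψ (hconj (ψ.symm z))
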